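/- arXiv:2204.03187 — 3 statements merged into one kernel-verified Lean document; each statement's English description precedes it below -/
import Mathlib

section
/- Let f : ℝ^n × ℝ^m → ℝ be differentiable, convex-concave, and L-smooth in the sense that ‖∇_x f(x₁,y₁) − ∇_x f(x₂,y₂)‖ ≤ L(‖x₁−x₂‖ + ‖y₁−y₂‖) and ‖∇_y f(x₁,y₁) − ∇_y f(x₂,y₂)‖ ≤ L(‖x₁−x₂‖ + ‖y₁−y₂‖) for all points. Let η ≤ 1/(2L), and let x_t, x̂_t, x_{t+1}, y_t, ŷ_t, y_{t+1} be arbitrary points. Define T₃ = η⟨∇_x f(x̂_t, ŷ_t) − ∇_x f(x_t, y_t), x̂_t − x_{t+1}⟩, T₅ = −η⟨∇_y f(x̂_t, ŷ_t) − ∇_y f(x_t, y_t), ŷ_t − y_{t+1}⟩, Ψ_x = T₃ − (1/2)(‖x̂_t − x_t‖² + ‖x̂_t − x_{t+1}‖²), and Ψ_y = T₅ − (1/2)(‖ŷ_t − y_t‖² + ‖ŷ_t − y_{t+1}‖²). Then Ψ_x + Ψ_y ≤ 0. -/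
open scoped RealInnerProductSpace

/-- The key smoothness-based cancellation in the extra-gradient analysis:
for an `L`-smooth, differentiable, convex-concave `f` and step size `η ≤ 1/(2L)`,
`Ψ_x + Ψ_y ≤ 0`, where `Ψ_x = T₃ − (1/2)(‖x̂_t − x_t‖² + ‖x̂_t − x_{t+1}‖²)`,
`Ψ_y = T₅ − (1/2)(‖ŷ_t − y_t‖² + ‖ŷ_t − y_{t+1}‖²)`, with
`T₃ = η⟨∇_x f(x̂_t, ŷ_t) − ∇_x f(x_t, y_t), x̂_t − x_{t+1}⟩` and
`T₅ = −η⟨∇_y f(x̂_t, ŷ_t) − ∇_y f(x_t, y_t), ŷ_t − y_{t+1}⟩`. -/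
theorem stmt11 {n m : ℕ}
    (f : EuclideanSpace ℝ (Fin n) → EuclideanSpace ℝ (Fin m) → ℝ)
    (gx : EuclideanSpace ℝ (Fin n) → EuclideanSpace ℝ (Fin m) → EuclideanSpace ℝ (Fin n))
    (gy : EuclideanSpace ℝ (Fin n) → EuclideanSpace ℝ (Fin m) → EuclideanSpace ℝ (Fin m))
    (hgx : ∀ x y, HasGradientAt (fun x' => f x' y) (gx x y) x)
    (hgy : ∀ x y, HasGradientAt (fun y' => f x y') (gy x y) y)
    (hconv : ∀ y, ConvexOn ℝ Set.univ (fun x => f x y))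
    (hconc : ∀ x, ConcaveOn ℝ Set.univ (fun y => f x y))
    (L : ℝ) (hL : 0 < L)
    (hsmooth_x : ∀ x₁ y₁ x₂ y₂,
      ‖gx x₁ y₁ - gx x₂ y₂‖ ≤ L * (‖x₁ - x₂‖ + ‖y₁ - y₂‖))
    (hsmooth_y : ∀ x₁ y₁ x₂ y₂,
      ‖gy x₁ y₁ - gy x₂ y₂‖ ≤ L * (‖x₁ - x₂‖ + ‖y₁ - y₂‖))
    (η : ℝ) (hη0 : 0 < η) (hη : η ≤ 1 / (2 * L))
    (xt xht xtp : EuclideanSpace ℝ (Fin n)) (yt yht ytp : EuclideanSpace ℝ (Fin m)) :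
    (η * ⟪gx xht yht - gx xt yt, xht - xtp⟫ -
        1 / 2 * (‖xht - xt‖ ^ 2 + ‖xht - xtp‖ ^ 2)) +
      (-(η * ⟪gy xht yht - gy xt yt, yht - ytp⟫) -
        1 / 2 * (‖yht - yt‖ ^ 2 + ‖yht - ytp‖ ^ 2)) ≤ 0 := by
  have h1 : ⟪gx xht yht - gx xt yt, xht - xtp⟫ ≤ ‖gx xht yht - gx xt yt‖ * ‖xht - xtp‖ :=
    real_inner_le_norm _ _
  have h2 : -⟪gy xht yht - gy xt yt, yht - ytp⟫ ≤ ‖gy xht yht - gy xt yt‖ * ‖yht - ytp‖ :=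
    (neg_le_abs _).trans (abs_real_inner_le_norm _ _)
  have hx := hsmooth_x xht yht xt yt
  have hy := hsmooth_y xht yht xt yt
  have hηL : η * L ≤ 1 / 2 := by
    rw [le_div_iff₀ (by positivity)] at hη
    nlinarith
  have nB : (0:ℝ) ≤ ‖xht - xtp‖ := norm_nonneg _
  have nD : (0:ℝ) ≤ ‖yht - ytp‖ := norm_nonneg _
  have nA : (0:ℝ) ≤ ‖xht - xt‖ := norm_nonneg _
  have nC : (0:ℝ) ≤ ‖yht - yt‖ := norm_nonneg _
  nlinarith [mul_le_mul_of_nonneg_left h1 hη0.le, mul_le_mul_of_nonneg_left h2 hη0.le,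
    mul_le_mul_of_nonneg_right (mul_le_mul_of_nonneg_left hx hη0.le) nB,
    mul_le_mul_of_nonneg_right (mul_le_mul_of_nonneg_left hy hη0.le) nD,
    mul_le_mul_of_nonneg_right hηL (mul_nonneg (add_nonneg nA nC) nB),
    mul_le_mul_of_nonneg_right hηL (mul_nonneg (add_nonneg nA nC) nD),
    sq_nonneg (‖xht - xt‖ - ‖xht - xtp‖), sq_nonneg (‖yht - yt‖ - ‖yht - ytp‖),
    sq_nonneg (‖xht - xt‖ - ‖yht - ytp‖), sq_nonneg (‖yht - yt‖ - ‖xht - xtp‖)]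
end

section
/- Let X ⊆ ℝ^n, Y ⊆ ℝ^m be convex compact sets with diameters at most D, and let f : X × Y → ℝ be differentiable, convex-concave, and L-smooth (as in Assumption 1). Consider the perturbed extra-gradient iteration with step size η ≤ 1/(2L): x̂_t = Π_X(x_t − η g̃_x(x_t,y_t)), ŷ_t = Π_Y(y_t + η g̃_y(x_t,y_t)), x_{t+1} = Π_X(x_t − η g̃_x(x̂_t,ŷ_t)), y_{t+1} = Π_Y(y_t + η g̃_y(x̂_t,ŷ_t)), where the perturbed gradients satisfy g̃_x(u,v) = ∇_x f(u,v) + e_x(u,v) and g̃_y(u,v) = ∇_y f(u,v) + e_y(u,v). Then for all t, x ∈ X, y ∈ Y: η⟨∇_x f(x̂_t, ŷ_t), x̂_t − x⟩ − η⟨∇_y f(x̂_t, ŷ_t), ŷ_t − y⟩ ≤ (1/2)(‖x−x_t‖² − ‖x−x_{t+1}‖² + ‖y−y_t‖² − ‖y−y_{t+1}‖²) + ηD(‖e_x(x_t,y_t)‖ + ‖e_x(x̂_t,ŷ_t)‖ + ‖e_y(x_t,y_t)‖ + ‖e_y(x̂_t,ŷ_t)‖). -/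
/-!
The two projection steps are compared through the obtuse-angle characterisation of the nearest
point in a convex set, which turns each step into a three-point inequality. Summing the inequality
for `x_{t+1}` (tested against the comparison point) with the one for `x̂_t` (tested against
`x_{t+1}`) telescopes the squared distances, leaving the gradient difference
`gx(x̂_t, ŷ_t) - gx(x_t, y_t)` paired with `x̂_t - x_{t+1}`. Smoothness bounds that pairing by
`L (‖x̂_t - x_t‖ + ‖ŷ_t - y_t‖) ‖x̂_t - x_{t+1}‖`, and `η L ≤ 1/2` lets the negative squared
step lengths absorb it. Each error vector is paired with a difference of two points of `X` or `Y`,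
which costs at most `D` times its norm.
-/

open scoped RealInnerProductSpace

section InnerProductSpace

variable {E F : Type*} [NormedAddCommGroup E] [InnerProductSpace ℝ E]
  [NormedAddCommGroup F] [InnerProductSpace ℝ F]

theorem real_inner_sub_le_of_isNearest {K : Set E} (hK : Convex ℝ K) {p q v z : E}
    (hv : v ∈ K) (hq : ∀ w ∈ K, ‖q - v‖ ≤ ‖q - w‖) (hz : z ∈ K) :
    ⟪p - q, v - z⟫ ≤ (‖z - p‖ ^ 2 - ‖z - v‖ ^ 2 - ‖v - p‖ ^ 2) / 2 := by
  have hobtuse : ⟪q - v, z - v⟫ ≤ 0 := by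
    have : Nonempty K := ⟨⟨v, hv⟩⟩
    refine (norm_eq_iInf_iff_real_inner_le_zero hK hv).mp ?_ z hz
    exact le_antisymm (le_ciInf fun w => hq w w.2)
      (ciInf_le (f := fun w : K => ‖q - w‖) ⟨0, fun _ ⟨_, hw⟩ => hw ▸ norm_nonneg _⟩ ⟨v, hv⟩)
  have hsplit : ‖z - p‖ ^ 2 = ‖z - v‖ ^ 2 + 2 * ⟪z - v, v - p⟫ + ‖v - p‖ ^ 2 := by
    rw [← norm_add_sq_real, sub_add_sub_cancel]
  have hinner : ⟪p - q, v - z⟫ = ⟪q - v, z - v⟫ + ⟪z - v, v - p⟫ := by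
    rw [show p - q = -((q - v) + (v - p)) by abel, show v - z = -(z - v) by abel,
      inner_neg_neg, inner_add_left, real_inner_comm (v - p)]
  linarith

theorem real_inner_sub_le_norm_mul_of_diam_le {K : Set E} (hK : Bornology.IsBounded K) {D : ℝ}
    (hD : Metric.diam K ≤ D) {x y : E} (hx : x ∈ K) (hy : y ∈ K) (e : E) :
    ⟪e, x - y⟫ ≤ ‖e‖ * D :=
  calc ⟪e, x - y⟫ ≤ ‖e‖ * ‖x - y‖ := real_inner_le_norm _ _
    _ ≤ ‖e‖ * D := by
      gcongr
      rw [← dist_eq_norm]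
      exact (Metric.dist_le_diam_of_mem hK hx hy).trans hD

theorem extragradient_descent_step_le {K : Set E} (hK : Convex ℝ K)
    (hKb : Bornology.IsBounded K) {D η : ℝ} (hD : Metric.diam K ≤ D) (hη : 0 ≤ η)
    {p v p' z g₀ e₀ g₁ e₁ : E}
    (hv : v ∈ K) (hvmin : ∀ w ∈ K, ‖(p - η • (g₀ + e₀)) - v‖ ≤ ‖(p - η • (g₀ + e₀)) - w‖)
    (hp' : p' ∈ K) (hp'min : ∀ w ∈ K, ‖(p - η • (g₁ + e₁)) - p'‖ ≤ ‖(p - η • (g₁ + e₁)) - w‖)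
    (hz : z ∈ K) :
    η * ⟪g₁, v - z⟫ ≤ (‖z - p‖ ^ 2 - ‖z - p'‖ ^ 2 - ‖v - p‖ ^ 2 - ‖v - p'‖ ^ 2) / 2 +
      η * ⟪g₁ - g₀, v - p'⟫ + η * D * (‖e₀‖ + ‖e₁‖) := by
  have hstep₁ := real_inner_sub_le_of_isNearest hK (p := p) hp' hp'min hz
  have hstep₀ := real_inner_sub_le_of_isNearest hK (p := p) hv hvmin hp'
  rw [sub_sub_cancel, real_inner_smul_left] at hstep₁ hstep₀
  have hsplit : ⟪g₁, v - z⟫ = ⟪g₁ + e₁, p' - z⟫ + ⟪g₀ + e₀, v - p'⟫ + ⟪g₁ - g₀, v - p'⟫ +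
      ⟪e₁, z - p'⟫ + ⟪e₀, p' - v⟫ := by
    simp only [inner_add_left, inner_sub_left, inner_sub_right]
    ring
  have herr₁ := real_inner_sub_le_norm_mul_of_diam_le hKb hD hz hp' e₁
  have herr₀ := real_inner_sub_le_norm_mul_of_diam_le hKb hD hp' hv e₀
  rw [norm_sub_rev p' v] at hstep₀
  rw [hsplit]
  linarith [mul_le_mul_of_nonneg_left herr₁ hη, mul_le_mul_of_nonneg_left herr₀ hη]

theorem extragradient_ascent_step_le {K : Set E} (hK : Convex ℝ K)
    (hKb : Bornology.IsBounded K) {D η : ℝ} (hD : Metric.diam K ≤ D) (hη : 0 ≤ η)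
    {p v p' z h₀ e₀ h₁ e₁ : E}
    (hv : v ∈ K) (hvmin : ∀ w ∈ K, ‖(p + η • (h₀ + e₀)) - v‖ ≤ ‖(p + η • (h₀ + e₀)) - w‖)
    (hp' : p' ∈ K) (hp'min : ∀ w ∈ K, ‖(p + η • (h₁ + e₁)) - p'‖ ≤ ‖(p + η • (h₁ + e₁)) - w‖)
    (hz : z ∈ K) :
    -(η * ⟪h₁, v - z⟫) ≤ (‖z - p‖ ^ 2 - ‖z - p'‖ ^ 2 - ‖v - p‖ ^ 2 - ‖v - p'‖ ^ 2) / 2 +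
      η * ⟪h₀ - h₁, v - p'⟫ + η * D * (‖e₀‖ + ‖e₁‖) := by
  have hascent (h e : E) : p + η • (h + e) = p - η • (-h + -e) := by
    rw [← neg_add, smul_neg, sub_neg_eq_add]
  rw [hascent] at hvmin hp'min
  have := extragradient_descent_step_le hK hKb hD hη hv hvmin hp' hp'min hz
  rwa [inner_neg_left, mul_neg, neg_sub_neg, norm_neg, norm_neg] at this

theorem add_mul_add_le_sum_sq (a b c d : ℝ) :
    (a + b) * (c + d) ≤ a ^ 2 + b ^ 2 + c ^ 2 + d ^ 2 := by
  nlinarith [sq_nonneg (a - c), sq_nonneg (a - d), sq_nonneg (b - c), sq_nonneg (b - d)]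

theorem mul_inner_add_mul_inner_le {η L a b : ℝ} (hη : 0 ≤ η) (hηL : η * L ≤ 1 / 2)
    (ha : 0 ≤ a) (hb : 0 ≤ b) {u p : E} {w q : F}
    (hu : ‖u‖ ≤ L * (a + b)) (hw : ‖w‖ ≤ L * (a + b)) :
    η * ⟪u, p⟫ + η * ⟪w, q⟫ ≤ (a ^ 2 + b ^ 2 + ‖p‖ ^ 2 + ‖q‖ ^ 2) / 2 := by
  have hup : ⟪u, p⟫ ≤ L * (a + b) * ‖p‖ :=
    (real_inner_le_norm u p).trans (mul_le_mul_of_nonneg_right hu (norm_nonneg p))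
  have hwq : ⟪w, q⟫ ≤ L * (a + b) * ‖q‖ :=
    (real_inner_le_norm w q).trans (mul_le_mul_of_nonneg_right hw (norm_nonneg q))
  have hprod : 0 ≤ (a + b) * (‖p‖ + ‖q‖) := by positivity
  calc η * ⟪u, p⟫ + η * ⟪w, q⟫ ≤ η * (L * (a + b) * ‖p‖) + η * (L * (a + b) * ‖q‖) := by
        gcongr
    _ = η * L * ((a + b) * (‖p‖ + ‖q‖)) := by ring
    _ ≤ 1 / 2 * ((a + b) * (‖p‖ + ‖q‖)) := mul_le_mul_of_nonneg_right hηL hprod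
    _ ≤ (a ^ 2 + b ^ 2 + ‖p‖ ^ 2 + ‖q‖ ^ 2) / 2 := by
      linarith [add_mul_add_le_sum_sq a b ‖p‖ ‖q‖]

end InnerProductSpace

theorem stmt15_general {n m : ℕ} (X : Set (EuclideanSpace ℝ (Fin n)))
    (Y : Set (EuclideanSpace ℝ (Fin m)))
    (hX : Convex ℝ X) (hY : Convex ℝ Y) (hXc : IsCompact X) (hYc : IsCompact Y)
    (D : ℝ) (hDX : Metric.diam X ≤ D) (hDY : Metric.diam Y ≤ D)
    (gx : EuclideanSpace ℝ (Fin n) → EuclideanSpace ℝ (Fin m) → EuclideanSpace ℝ (Fin n))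
    (gy : EuclideanSpace ℝ (Fin n) → EuclideanSpace ℝ (Fin m) → EuclideanSpace ℝ (Fin m))
    (L : ℝ) (hL : 0 < L)
    (hsmooth_x : ∀ x₁ ∈ X, ∀ y₁ ∈ Y, ∀ x₂ ∈ X, ∀ y₂ ∈ Y,
      ‖gx x₁ y₁ - gx x₂ y₂‖ ≤ L * (‖x₁ - x₂‖ + ‖y₁ - y₂‖))
    (hsmooth_y : ∀ x₁ ∈ X, ∀ y₁ ∈ Y, ∀ x₂ ∈ X, ∀ y₂ ∈ Y,
      ‖gy x₁ y₁ - gy x₂ y₂‖ ≤ L * (‖x₁ - x₂‖ + ‖y₁ - y₂‖))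
    (η : ℝ) (hη0 : 0 < η) (hη : η ≤ 1 / (2 * L))
    (ex : EuclideanSpace ℝ (Fin n) → EuclideanSpace ℝ (Fin m) → EuclideanSpace ℝ (Fin n))
    (ey : EuclideanSpace ℝ (Fin n) → EuclideanSpace ℝ (Fin m) → EuclideanSpace ℝ (Fin m))
    (x xh : ℕ → EuclideanSpace ℝ (Fin n)) (y yh : ℕ → EuclideanSpace ℝ (Fin m))
    (hxmem : ∀ t, x t ∈ X) (hymem : ∀ t, y t ∈ Y)
    (hxhmem : ∀ t, xh t ∈ X) (hyhmem : ∀ t, yh t ∈ Y)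
    -- x̂_t = Π_X(x_t − η g̃_x(x_t, y_t))
    (hxh : ∀ t, ∀ z ∈ X,
      ‖(x t - η • (gx (x t) (y t) + ex (x t) (y t))) - xh t‖ ≤
        ‖(x t - η • (gx (x t) (y t) + ex (x t) (y t))) - z‖)
    -- ŷ_t = Π_Y(y_t + η g̃_y(x_t, y_t))
    (hyh : ∀ t, ∀ z ∈ Y,
      ‖(y t + η • (gy (x t) (y t) + ey (x t) (y t))) - yh t‖ ≤
        ‖(y t + η • (gy (x t) (y t) + ey (x t) (y t))) - z‖)
    -- x_{t+1} = Π_X(x_t − η g̃_x(x̂_t, ŷ_t))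
    (hxn : ∀ t, ∀ z ∈ X,
      ‖(x t - η • (gx (xh t) (yh t) + ex (xh t) (yh t))) - x (t + 1)‖ ≤
        ‖(x t - η • (gx (xh t) (yh t) + ex (xh t) (yh t))) - z‖)
    -- y_{t+1} = Π_Y(y_t + η g̃_y(x̂_t, ŷ_t))
    (hyn : ∀ t, ∀ z ∈ Y,
      ‖(y t + η • (gy (xh t) (yh t) + ey (xh t) (yh t))) - y (t + 1)‖ ≤
        ‖(y t + η • (gy (xh t) (yh t) + ey (xh t) (yh t))) - z‖) :
    ∀ t, ∀ x' ∈ X, ∀ y' ∈ Y,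
      η * ⟪gx (xh t) (yh t), xh t - x'⟫ - η * ⟪gy (xh t) (yh t), yh t - y'⟫ ≤
        1 / 2 * (‖x' - x t‖ ^ 2 - ‖x' - x (t + 1)‖ ^ 2 +
          ‖y' - y t‖ ^ 2 - ‖y' - y (t + 1)‖ ^ 2) +
        η * D * (‖ex (x t) (y t)‖ + ‖ex (xh t) (yh t)‖ +
          ‖ey (x t) (y t)‖ + ‖ey (xh t) (yh t)‖) := by
  intro t x' hx' y' hy'
  have hηL : η * L ≤ 1 / 2 := by
    rw [le_div_iff₀ (by positivity)] at hη
    linarith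
  have hxstep := extragradient_descent_step_le hX hXc.isBounded hDX hη0.le (hxhmem t) (hxh t)
    (hxmem (t + 1)) (hxn t) hx'
  have hystep := extragradient_ascent_step_le hY hYc.isBounded hDY hη0.le (hyhmem t) (hyh t)
    (hymem (t + 1)) (hyn t) hy'
  have hgy_lip : ‖gy (x t) (y t) - gy (xh t) (yh t)‖ ≤ L * (‖xh t - x t‖ + ‖yh t - y t‖) := by
    rw [norm_sub_rev]
    exact hsmooth_y _ (hxhmem t) _ (hyhmem t) _ (hxmem t) _ (hymem t)
  have hsmooth := mul_inner_add_mul_inner_le hη0.le hηL (norm_nonneg _) (norm_nonneg _)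
    (hsmooth_x _ (hxhmem t) _ (hyhmem t) _ (hxmem t) _ (hymem t)) hgy_lip
    (p := xh t - x (t + 1)) (q := yh t - y (t + 1))
  linarith

/-- Lemma 2 of the paper: one-step progress bound for the perturbed (robust)
extra-gradient iteration. Projections are characterized as nearest points, and
`g̃ = ∇f + e` with arbitrary error vectors `e`. -/
theorem stmt15 {n m : ℕ} (X : Set (EuclideanSpace ℝ (Fin n)))
    (Y : Set (EuclideanSpace ℝ (Fin m)))
    (hX : Convex ℝ X) (hY : Convex ℝ Y) (hXc : IsCompact X) (hYc : IsCompact Y)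
    (D : ℝ) (hDX : Metric.diam X ≤ D) (hDY : Metric.diam Y ≤ D)
    (f : EuclideanSpace ℝ (Fin n) → EuclideanSpace ℝ (Fin m) → ℝ)
    (gx : EuclideanSpace ℝ (Fin n) → EuclideanSpace ℝ (Fin m) → EuclideanSpace ℝ (Fin n))
    (gy : EuclideanSpace ℝ (Fin n) → EuclideanSpace ℝ (Fin m) → EuclideanSpace ℝ (Fin m))
    (hgx : ∀ x y, HasGradientAt (fun x' => f x' y) (gx x y) x)
    (hgy : ∀ x y, HasGradientAt (fun y' => f x y') (gy x y) y)
    (hconv : ∀ y ∈ Y, ConvexOn ℝ X (fun x => f x y))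
    (hconc : ∀ x ∈ X, ConcaveOn ℝ Y (fun y => f x y))
    (L : ℝ) (hL : 0 < L)
    (hsmooth_x : ∀ x₁ ∈ X, ∀ y₁ ∈ Y, ∀ x₂ ∈ X, ∀ y₂ ∈ Y,
      ‖gx x₁ y₁ - gx x₂ y₂‖ ≤ L * (‖x₁ - x₂‖ + ‖y₁ - y₂‖))
    (hsmooth_y : ∀ x₁ ∈ X, ∀ y₁ ∈ Y, ∀ x₂ ∈ X, ∀ y₂ ∈ Y,
      ‖gy x₁ y₁ - gy x₂ y₂‖ ≤ L * (‖x₁ - x₂‖ + ‖y₁ - y₂‖))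
    (η : ℝ) (hη0 : 0 < η) (hη : η ≤ 1 / (2 * L))
    (ex : EuclideanSpace ℝ (Fin n) → EuclideanSpace ℝ (Fin m) → EuclideanSpace ℝ (Fin n))
    (ey : EuclideanSpace ℝ (Fin n) → EuclideanSpace ℝ (Fin m) → EuclideanSpace ℝ (Fin m))
    (x xh : ℕ → EuclideanSpace ℝ (Fin n)) (y yh : ℕ → EuclideanSpace ℝ (Fin m))
    (hxmem : ∀ t, x t ∈ X) (hymem : ∀ t, y t ∈ Y)
    (hxhmem : ∀ t, xh t ∈ X) (hyhmem : ∀ t, yh t ∈ Y)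
    -- x̂_t = Π_X(x_t − η g̃_x(x_t, y_t))
    (hxh : ∀ t, ∀ z ∈ X,
      ‖(x t - η • (gx (x t) (y t) + ex (x t) (y t))) - xh t‖ ≤
        ‖(x t - η • (gx (x t) (y t) + ex (x t) (y t))) - z‖)
    -- ŷ_t = Π_Y(y_t + η g̃_y(x_t, y_t))
    (hyh : ∀ t, ∀ z ∈ Y,
      ‖(y t + η • (gy (x t) (y t) + ey (x t) (y t))) - yh t‖ ≤
        ‖(y t + η • (gy (x t) (y t) + ey (x t) (y t))) - z‖)
    -- x_{t+1} = Π_X(x_t − η g̃_x(x̂_t, ŷ_t))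
    (hxn : ∀ t, ∀ z ∈ X,
      ‖(x t - η • (gx (xh t) (yh t) + ex (xh t) (yh t))) - x (t + 1)‖ ≤
        ‖(x t - η • (gx (xh t) (yh t) + ex (xh t) (yh t))) - z‖)
    -- y_{t+1} = Π_Y(y_t + η g̃_y(x̂_t, ŷ_t))
    (hyn : ∀ t, ∀ z ∈ Y,
      ‖(y t + η • (gy (xh t) (yh t) + ey (xh t) (yh t))) - y (t + 1)‖ ≤
        ‖(y t + η • (gy (xh t) (yh t) + ey (xh t) (yh t))) - z‖) :
    ∀ t, ∀ x' ∈ X, ∀ y' ∈ Y,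
      η * ⟪gx (xh t) (yh t), xh t - x'⟫ - η * ⟪gy (xh t) (yh t), yh t - y'⟫ ≤
        1 / 2 * (‖x' - x t‖ ^ 2 - ‖x' - x (t + 1)‖ ^ 2 +
          ‖y' - y t‖ ^ 2 - ‖y' - y (t + 1)‖ ^ 2) +
        η * D * (‖ex (x t) (y t)‖ + ‖ex (xh t) (yh t)‖ +
          ‖ey (x t) (y t)‖ + ‖ey (xh t) (yh t)‖) :=
  stmt15_general X Y hX hY hXc hYc D hDX hDY gx gy L hL hsmooth_x hsmooth_y η hη0 hη ex ey x xh y yh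
    hxmem hymem hxhmem hyhmem hxh hyh hxn hyn
end

section
/- Let f : X × Y → ℝ be differentiable, L-smooth, and μ-strongly convex-μ-strongly concave on convex compact sets X, Y with diameters at most D, and let z* = (x*, y*) be its saddle point. Consider the perturbed extra-gradient iteration with step size η = 1/(4L) where all gradient errors are bounded in norm by Δ at every query point, so that ‖F(z) − G̃(z)‖ ≤ √2·Δ for z ∈ {z_t, ẑ_t}, where F(z) = (∇_x f, −∇_y f) and G̃ is the perturbed operator. Then for each t: ‖z* − z_{t+1}‖² ≤ (1 − 1/(4κ))‖z* − z_t‖² + 2ΔD/L, where κ = L/μ. Consequently ‖z* − z_{T+1}‖² ≤ e^{−T/(4κ)}‖z* − z_1‖² + 8κΔD/L. -/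
/-!
Write `Π` for the projection and `G̃ = F + e` for the perturbed operator. The variational
characterisation `⟪v - Π v, w - Π v⟫ ≤ 0` of the projection onto a convex set turns the two
half-steps of extragradient into the three-point inequality
`‖z_{t+1} - z*‖² ≤ ‖z_t - z*‖² - ‖z_t - ẑ_t‖² - ‖ẑ_t - z_{t+1}‖²
  - 2η⟪G̃(ẑ_t), ẑ_t - z*⟫ + 2η⟪G̃(z_t) - G̃(ẑ_t), z_{t+1} - ẑ_t⟫`.
With `2ηL = 1/2` smoothness absorbs the last term into the two negative squares, each gradient
error costs at most `2ηΔD`, and `F` is `μ`-strongly monotone towards the saddle point,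
`⟪F(ẑ), ẑ - z*⟫ ≥ μ‖ẑ - z*‖²`. Since `‖z_t - z*‖² ≤ 2‖ẑ_t - z*‖² + 2‖z_t - ẑ_t‖²` and
`ημ ≤ 1/4`, this gives the contraction factor `1 - ημ = 1 - 1/(4κ)`; unrolling the recursion
with `1 - δ ≤ e^{-δ}` gives the second bound.
-/

open scoped RealInnerProductSpace
open Set Filter Topology

theorem le_of_forall_mul_one_sub_le {a b : ℝ} (h : ∀ t ∈ Ioo (0 : ℝ) 1, a * (1 - t) ≤ b) :
    a ≤ b := by
  have hlim : Tendsto (fun t : ℝ => a * (1 - t)) (𝓝[>] 0) (𝓝 a) := by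
    have : Continuous fun t : ℝ => a * (1 - t) := by fun_prop
    simpa using (this.tendsto 0).mono_left nhdsWithin_le_nhds
  exact le_of_tendsto hlim (eventually_of_mem (Ioo_mem_nhdsGT one_pos) h)

theorem le_exp_mul_add_div_of_le_one_sub_mul_add {r : ℕ → ℝ} {δ b : ℝ} (hδ₀ : 0 < δ)
    (hδ₁ : δ ≤ 1) (hb : 0 ≤ b) (hr₀ : 0 ≤ r 0) (h : ∀ t, r (t + 1) ≤ (1 - δ) * r t + b)
    (T : ℕ) : r T ≤ Real.exp (-(T * δ)) * r 0 + b / δ := by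
  induction T with
  | zero => simpa using div_nonneg hb hδ₀.le
  | succ T ih =>
    have hcontract : (1 - δ) * Real.exp (-(T * δ)) ≤ Real.exp (-((T + 1 : ℕ) * δ)) := by
      rw [Nat.cast_succ, add_mul, one_mul, neg_add, Real.exp_add, mul_comm]
      gcongr
      exact Real.one_sub_le_exp_neg δ
    calc r (T + 1) ≤ (1 - δ) * (Real.exp (-(T * δ)) * r 0 + b / δ) + b :=
          (h T).trans (by gcongr)
      _ = (1 - δ) * Real.exp (-(T * δ)) * r 0 + b / δ := by field_simp; ring
      _ ≤ Real.exp (-((T + 1 : ℕ) * δ)) * r 0 + b / δ := by gcongr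

theorem norm_sub_sq_le_two_mul {G : Type*} [SeminormedAddCommGroup G] (a b c : G) :
    ‖a - c‖ ^ 2 ≤ 2 * (‖a - b‖ ^ 2 + ‖b - c‖ ^ 2) :=
  (pow_le_pow_left₀ (norm_nonneg _) (norm_sub_le_norm_sub_add_norm_sub a b c) 2).trans add_sq_le

theorem norm_sub_le_of_diam_le {G : Type*} [SeminormedAddCommGroup G] {s : Set G}
    (hs : Bornology.IsBounded s) {D : ℝ} (hD : Metric.diam s ≤ D) :
    ∀ a ∈ s, ∀ b ∈ s, ‖a - b‖ ≤ D := fun a ha b hb =>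
  dist_eq_norm a b ▸ (Metric.dist_le_diam_of_mem hs ha hb).trans hD

section

variable {E : Type*} [NormedAddCommGroup E] [InnerProductSpace ℝ E]

theorem inner_sub_nonpos_of_forall_norm_sub_le {C : Set E} (hC : Convex ℝ C) {u v w : E}
    (hu : u ∈ C) (hw : w ∈ C) (hmin : ∀ z ∈ C, ‖v - u‖ ≤ ‖v - z‖) : ⟪v - u, w - u⟫ ≤ 0 := by
  have : Nonempty C := ⟨⟨u, hu⟩⟩
  refine (norm_eq_iInf_iff_real_inner_le_zero hC hu).1 (le_antisymm ?_ ?_) w hw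
  · exact le_ciInf fun z => hmin z z.2
  · exact ciInf_le (f := fun z : C => ‖v - z‖)
      ⟨0, forall_mem_range.2 fun z => norm_nonneg _⟩ ⟨u, hu⟩

theorem norm_sub_sq_le_of_extragradient {C : Set E} (hC : Convex ℝ C) {u uh up us G₀ G : E}
    {η : ℝ} (huh : uh ∈ C) (hup : up ∈ C) (hus : us ∈ C)
    (hproj₀ : ∀ z ∈ C, ‖(u - η • G₀) - uh‖ ≤ ‖(u - η • G₀) - z‖)
    (hproj : ∀ z ∈ C, ‖(u - η • G) - up‖ ≤ ‖(u - η • G) - z‖) :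
    ‖up - us‖ ^ 2 ≤ ‖u - us‖ ^ 2 - ‖u - uh‖ ^ 2 - ‖uh - up‖ ^ 2
      - 2 * η * ⟪G, uh - us⟫ + 2 * η * ⟪G₀ - G, up - uh⟫ := by
  have h₀ := inner_sub_nonpos_of_forall_norm_sub_le hC huh hup hproj₀
  have h := inner_sub_nonpos_of_forall_norm_sub_le hC hup hus hproj
  have e₁ : ‖u - us‖ ^ 2 = ‖u - up‖ ^ 2 + 2 * ⟪u - up, up - us⟫ + ‖up - us‖ ^ 2 := by
    rw [← norm_add_sq_real, sub_add_sub_cancel]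
  have e₂ : ‖u - up‖ ^ 2 = ‖u - uh‖ ^ 2 + 2 * ⟪u - uh, uh - up⟫ + ‖uh - up‖ ^ 2 := by
    rw [← norm_add_sq_real, sub_add_sub_cancel]
  simp only [inner_sub_left, inner_sub_right, real_inner_smul_right, real_inner_comm]
    at h₀ h e₁ e₂ ⊢
  linarith

theorem real_inner_le_mul_of_norm_le {a b : E} {α β : ℝ} (ha : ‖a‖ ≤ α) (hb : ‖b‖ ≤ β) :
    ⟪a, b⟫ ≤ α * β :=
  (real_inner_le_norm a b).trans <|
    mul_le_mul ha hb (norm_nonneg b) ((norm_nonneg a).trans ha)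

theorem norm_sub_sq_le_of_perturbed_extragradient {C : Set E} (hC : Convex ℝ C)
    {u uh up us F₀ F e₀ e : E} {η ℓ Δ D : ℝ} (hη : 0 ≤ η)
    (huh : uh ∈ C) (hup : up ∈ C) (hus : us ∈ C)
    (hproj₀ : ∀ z ∈ C, ‖(u - η • (F₀ + e₀)) - uh‖ ≤ ‖(u - η • (F₀ + e₀)) - z‖)
    (hproj : ∀ z ∈ C, ‖(u - η • (F + e)) - up‖ ≤ ‖(u - η • (F + e)) - z‖)
    (hF : ‖F₀ - F‖ ≤ ℓ) (he₀ : ‖e₀‖ ≤ Δ) (he : ‖e‖ ≤ Δ)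
    (hD : ∀ a ∈ C, ∀ b ∈ C, ‖a - b‖ ≤ D) :
    ‖up - us‖ ^ 2 ≤ ‖u - us‖ ^ 2 - ‖u - uh‖ ^ 2 - ‖uh - up‖ ^ 2
      - 2 * η * ⟪F, uh - us⟫ + 2 * η * (ℓ * ‖uh - up‖) + 4 * η * (Δ * D) := by
  have h := norm_sub_sq_le_of_extragradient hC huh hup hus hproj₀ hproj
  have hFF : ⟪F₀ - F, up - uh⟫ ≤ ℓ * ‖uh - up‖ :=
    real_inner_le_mul_of_norm_le hF (norm_sub_rev up uh).le
  have he₀' : ⟪e₀, up - uh⟫ ≤ Δ * D := real_inner_le_mul_of_norm_le he₀ (hD _ hup _ huh)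
  have he' : ⟪-e, up - us⟫ ≤ Δ * D :=
    real_inner_le_mul_of_norm_le ((norm_neg e).trans_le he) (hD _ hup _ hus)
  have hsplit : ⟪F + e, uh - us⟫ - ⟪(F₀ + e₀) - (F + e), up - uh⟫
      = ⟪F, uh - us⟫ - ⟪F₀ - F, up - uh⟫ - ⟪e₀, up - uh⟫ - ⟪-e, up - us⟫ := by
    simp only [inner_add_left, inner_sub_left, inner_neg_left, inner_sub_right]
    ring
  have hbound : ⟪F, uh - us⟫ - ℓ * ‖uh - up‖ - 2 * (Δ * D)
      ≤ ⟪F + e, uh - us⟫ - ⟪(F₀ + e₀) - (F + e), up - uh⟫ := by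
    rw [hsplit]; linarith
  linarith [mul_le_mul_of_nonneg_left hbound hη]

theorem add_mul_norm_sub_sq_le_of_isMinOn {C : Set E} (hC : Convex ℝ C) {φ : E → ℝ}
    {g : E → E} {μ : ℝ}
    (hsc : ∀ x₁ ∈ C, ∀ x₂ ∈ C, φ x₁ + ⟪g x₁, x₂ - x₁⟫ + μ / 2 * ‖x₂ - x₁‖ ^ 2 ≤ φ x₂)
    {xs x : E} (hxs : xs ∈ C) (hmin : IsMinOn φ C xs) (hx : x ∈ C) :
    φ xs + μ / 2 * ‖x - xs‖ ^ 2 ≤ φ x := by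
  -- average the first-order inequalities at `xs + t • (x - xs)` towards `xs` and `x`,
  -- then let `t → 0`
  suffices ∀ t ∈ Ioo (0 : ℝ) 1, μ / 2 * ‖x - xs‖ ^ 2 * (1 - t) ≤ φ x - φ xs by
    linarith [le_of_forall_mul_one_sub_le this]
  rintro t ⟨ht₀, ht₁⟩
  set d := x - xs
  have hxt : xs + t • d ∈ C := hC.add_smul_sub_mem hxs hx ⟨ht₀.le, ht₁.le⟩
  have h₁ := hsc _ hxt xs hxs
  have h₂ := hsc _ hxt x hx
  rw [show xs - (xs + t • d) = (-t) • d by module] at h₁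
  rw [show x - (xs + t • d) = (1 - t) • d by simp only [d]; module] at h₂
  simp only [real_inner_smul_right, norm_smul, Real.norm_eq_abs, mul_pow, sq_abs] at h₁ h₂
  have hφ : φ xs ≤ φ (xs + t • d) := hmin hxt
  have : t * (μ / 2 * ‖d‖ ^ 2 * (1 - t)) ≤ t * (φ x - φ xs) := by
    nlinarith [mul_le_mul_of_nonneg_left h₁ (sub_nonneg.2 ht₁.le),
      mul_le_mul_of_nonneg_left h₂ ht₀.le]
  exact le_of_mul_le_mul_left this ht₀

variable {F : Type*} [NormedAddCommGroup F] [InnerProductSpace ℝ F]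

theorem mul_add_le_inner_sub_inner_of_saddle {X : Set E} {Y : Set F} (hX : Convex ℝ X)
    (hY : Convex ℝ Y) {f : E → F → ℝ} {gx : E → F → E} {gy : E → F → F} {μ : ℝ}
    (hsc : ∀ y ∈ Y, ∀ x₁ ∈ X, ∀ x₂ ∈ X,
      f x₁ y + ⟪gx x₁ y, x₂ - x₁⟫ + μ / 2 * ‖x₂ - x₁‖ ^ 2 ≤ f x₂ y)
    (hscc : ∀ x ∈ X, ∀ y₁ ∈ Y, ∀ y₂ ∈ Y,
      f x y₂ ≤ f x y₁ + ⟪gy x y₁, y₂ - y₁⟫ - μ / 2 * ‖y₂ - y₁‖ ^ 2)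
    {xs : E} {ys : F} (hxs : xs ∈ X) (hys : ys ∈ Y)
    (hsaddle : ∀ x ∈ X, ∀ y ∈ Y, f xs y ≤ f xs ys ∧ f xs ys ≤ f x ys)
    {x : E} {y : F} (hx : x ∈ X) (hy : y ∈ Y) :
    μ * (‖x - xs‖ ^ 2 + ‖y - ys‖ ^ 2) ≤ ⟪gx x y, x - xs⟫ - ⟪gy x y, y - ys⟫ := by
  have hgrowth_x : f xs ys + μ / 2 * ‖x - xs‖ ^ 2 ≤ f x ys :=
    add_mul_norm_sub_sq_le_of_isMinOn hX (hsc ys hys) hxs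
      (fun x' hx' => (hsaddle x' hx' ys hys).2) hx
  have hgrowth_y : -f xs ys + μ / 2 * ‖y - ys‖ ^ 2 ≤ -f xs y := by
    refine add_mul_norm_sub_sq_le_of_isMinOn (φ := fun y' => -f xs y')
      (g := fun y' => -gy xs y') hY (fun y₁ h₁ y₂ h₂ => ?_) hys (fun y' hy' => ?_) hy
    · rw [inner_neg_left]; linarith [hscc xs hxs y₁ h₁ y₂ h₂]
    · simpa using (hsaddle xs hxs y' hy').1
  have hx' := hsc y hy x hx xs hxs
  have hy' := hscc x hx y hy ys hys
  rw [← neg_sub x xs, inner_neg_right, norm_neg] at hx'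
  rw [← neg_sub y ys, inner_neg_right, norm_neg] at hy'
  linarith

theorem perturbed_extragradient_step {X : Set E} {Y : Set F} (hX : Convex ℝ X)
    (hY : Convex ℝ Y) {D : ℝ}
    (hDX : ∀ a ∈ X, ∀ b ∈ X, ‖a - b‖ ≤ D) (hDY : ∀ a ∈ Y, ∀ b ∈ Y, ‖a - b‖ ≤ D)
    {f : E → F → ℝ} {gx : E → F → E} {gy : E → F → F} {μ L : ℝ} (hμ : 0 < μ) (hμL : μ ≤ L)
    (hsc : ∀ y ∈ Y, ∀ x₁ ∈ X, ∀ x₂ ∈ X,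
      f x₁ y + ⟪gx x₁ y, x₂ - x₁⟫ + μ / 2 * ‖x₂ - x₁‖ ^ 2 ≤ f x₂ y)
    (hscc : ∀ x ∈ X, ∀ y₁ ∈ Y, ∀ y₂ ∈ Y,
      f x y₂ ≤ f x y₁ + ⟪gy x y₁, y₂ - y₁⟫ - μ / 2 * ‖y₂ - y₁‖ ^ 2)
    (hsmooth_x : ∀ x₁ ∈ X, ∀ y₁ ∈ Y, ∀ x₂ ∈ X, ∀ y₂ ∈ Y,
      ‖gx x₁ y₁ - gx x₂ y₂‖ ≤ L * (‖x₁ - x₂‖ + ‖y₁ - y₂‖))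
    (hsmooth_y : ∀ x₁ ∈ X, ∀ y₁ ∈ Y, ∀ x₂ ∈ X, ∀ y₂ ∈ Y,
      ‖gy x₁ y₁ - gy x₂ y₂‖ ≤ L * (‖x₁ - x₂‖ + ‖y₁ - y₂‖))
    {xs : E} {ys : F} (hxs : xs ∈ X) (hys : ys ∈ Y)
    (hsaddle : ∀ x ∈ X, ∀ y ∈ Y, f xs y ≤ f xs ys ∧ f xs ys ≤ f x ys)
    {η : ℝ} (hη : η = 1 / (4 * L)) {ex : E → F → E} {ey : E → F → F}
    {x₀ xh x₁ : E} {y₀ yh y₁ : F} (hx₀ : x₀ ∈ X) (hy₀ : y₀ ∈ Y) (hxhX : xh ∈ X) (hyhY : yh ∈ Y)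
    (hx₁ : x₁ ∈ X) (hy₁ : y₁ ∈ Y)
    (hxh : ∀ z ∈ X, ‖(x₀ - η • (gx x₀ y₀ + ex x₀ y₀)) - xh‖ ≤
      ‖(x₀ - η • (gx x₀ y₀ + ex x₀ y₀)) - z‖)
    (hyh : ∀ z ∈ Y, ‖(y₀ + η • (gy x₀ y₀ + ey x₀ y₀)) - yh‖ ≤
      ‖(y₀ + η • (gy x₀ y₀ + ey x₀ y₀)) - z‖)
    (hxn : ∀ z ∈ X, ‖(x₀ - η • (gx xh yh + ex xh yh)) - x₁‖ ≤
      ‖(x₀ - η • (gx xh yh + ex xh yh)) - z‖)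
    (hyn : ∀ z ∈ Y, ‖(y₀ + η • (gy xh yh + ey xh yh)) - y₁‖ ≤
      ‖(y₀ + η • (gy xh yh + ey xh yh)) - z‖)
    {Δ : ℝ} (herr : ‖ex x₀ y₀‖ ≤ Δ ∧ ‖ex xh yh‖ ≤ Δ ∧ ‖ey x₀ y₀‖ ≤ Δ ∧ ‖ey xh yh‖ ≤ Δ) :
    ‖xs - x₁‖ ^ 2 + ‖ys - y₁‖ ^ 2 ≤
      (1 - 1 / (4 * (L / μ))) * (‖xs - x₀‖ ^ 2 + ‖ys - y₀‖ ^ 2) + 2 * Δ * D / L := by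
  obtain ⟨hex₀, hexh, hey₀, heyh⟩ := herr
  have hL : 0 < L := hμ.trans_le hμL
  have hη₀ : 0 ≤ η := by rw [hη]; positivity
  have hstep_x := norm_sub_sq_le_of_perturbed_extragradient hX hη₀ hxhX hx₁ hxs hxh hxn
    (hsmooth_x x₀ hx₀ y₀ hy₀ xh hxhX yh hyhY) hex₀ hexh hDX
  -- the ascent step in `y` is a descent step for the operator `-gy`
  have hstep_y := norm_sub_sq_le_of_perturbed_extragradient hY hη₀ hyhY hy₁ hys
    (F₀ := -gy x₀ y₀) (e₀ := -ey x₀ y₀) (F := -gy xh yh) (e := -ey xh yh)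
    (ℓ := L * (‖x₀ - xh‖ + ‖y₀ - yh‖))
    (by simpa only [← neg_add, smul_neg, sub_neg_eq_add] using hyh)
    (by simpa only [← neg_add, smul_neg, sub_neg_eq_add] using hyn)
    (by rw [neg_sub_neg, norm_sub_rev]; exact hsmooth_y x₀ hx₀ y₀ hy₀ xh hxhX yh hyhY)
    ((norm_neg _).trans_le hey₀) ((norm_neg _).trans_le heyh) hDY
  rw [inner_neg_left] at hstep_y
  have hmono := mul_add_le_inner_sub_inner_of_saddle hX hY hsc hscc hxs hys hsaddle hxhX hyhY
  have htri_x := norm_sub_sq_le_two_mul x₀ xh xs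
  have htri_y := norm_sub_sq_le_two_mul y₀ yh ys
  have hκ : 1 / (4 * (L / μ)) = η * μ := by rw [hη]; field_simp
  have hΔ : 2 * Δ * D / L = 8 * η * (Δ * D) := by rw [hη]; field_simp; ring
  have h2ηL : 2 * η * L = 1 / 2 := by rw [hη]; field_simp; ring
  have hημ : η * μ ≤ 1 / 4 := by
    rw [hη, div_mul_eq_mul_div, one_mul, div_le_iff₀ (by positivity)]; linarith
  rw [norm_sub_rev xs, norm_sub_rev ys, norm_sub_rev xs, norm_sub_rev ys, hκ, hΔ]
  have hcross : 2 * η * L * ((‖x₀ - xh‖ + ‖y₀ - yh‖) * (‖xh - x₁‖ + ‖yh - y₁‖))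
      ≤ (‖x₀ - xh‖ ^ 2 + ‖y₀ - yh‖ ^ 2 + ‖xh - x₁‖ ^ 2 + ‖yh - y₁‖ ^ 2) / 2 := by
    rw [h2ηL]
    nlinarith [sq_nonneg (‖x₀ - xh‖ + ‖y₀ - yh‖ - ‖xh - x₁‖ - ‖yh - y₁‖),
      sq_nonneg (‖x₀ - xh‖ - ‖y₀ - yh‖), sq_nonneg (‖xh - x₁‖ - ‖yh - y₁‖)]
  have hημ₀ : 0 ≤ η * μ := mul_nonneg hη₀ hμ.le
  linarith [mul_le_mul_of_nonneg_left hmono hη₀,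
    mul_le_mul_of_nonneg_left (add_le_add htri_x htri_y) hημ₀,
    mul_nonneg (sub_nonneg.2 hημ) (add_nonneg (sq_nonneg ‖x₀ - xh‖) (sq_nonneg ‖y₀ - yh‖)),
    sq_nonneg ‖xh - x₁‖, sq_nonneg ‖yh - y₁‖]

end

theorem stmt17_general {n m : ℕ} (X : Set (EuclideanSpace ℝ (Fin n)))
    (Y : Set (EuclideanSpace ℝ (Fin m)))
    (hX : Convex ℝ X) (hY : Convex ℝ Y) (hXc : IsCompact X) (hYc : IsCompact Y)
    (D : ℝ) (hDX : Metric.diam X ≤ D) (hDY : Metric.diam Y ≤ D)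
    (f : EuclideanSpace ℝ (Fin n) → EuclideanSpace ℝ (Fin m) → ℝ)
    (gx : EuclideanSpace ℝ (Fin n) → EuclideanSpace ℝ (Fin m) → EuclideanSpace ℝ (Fin n))
    (gy : EuclideanSpace ℝ (Fin n) → EuclideanSpace ℝ (Fin m) → EuclideanSpace ℝ (Fin m))
    (μ L : ℝ) (hμ : 0 < μ) (hμL : μ ≤ L)
    -- μ-strong convexity in x and μ-strong concavity in y (Assumption 2)
    (hsc : ∀ y ∈ Y, ∀ x₁ ∈ X, ∀ x₂ ∈ X,
      f x₂ y ≥ f x₁ y + ⟪gx x₁ y, x₂ - x₁⟫ + μ / 2 * ‖x₂ - x₁‖ ^ 2)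
    (hscc : ∀ x ∈ X, ∀ y₁ ∈ Y, ∀ y₂ ∈ Y,
      f x y₂ ≤ f x y₁ + ⟪gy x y₁, y₂ - y₁⟫ - μ / 2 * ‖y₂ - y₁‖ ^ 2)
    -- L-smoothness (Assumption 1)
    (hsmooth_x : ∀ x₁ ∈ X, ∀ y₁ ∈ Y, ∀ x₂ ∈ X, ∀ y₂ ∈ Y,
      ‖gx x₁ y₁ - gx x₂ y₂‖ ≤ L * (‖x₁ - x₂‖ + ‖y₁ - y₂‖))
    (hsmooth_y : ∀ x₁ ∈ X, ∀ y₁ ∈ Y, ∀ x₂ ∈ X, ∀ y₂ ∈ Y,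
      ‖gy x₁ y₁ - gy x₂ y₂‖ ≤ L * (‖x₁ - x₂‖ + ‖y₁ - y₂‖))
    -- saddle point z* = (x*, y*)
    (xs : EuclideanSpace ℝ (Fin n)) (ys : EuclideanSpace ℝ (Fin m))
    (hxs : xs ∈ X) (hys : ys ∈ Y)
    (hsaddle : ∀ x ∈ X, ∀ y ∈ Y, f xs y ≤ f xs ys ∧ f xs ys ≤ f x ys)
    -- step size η = 1/(4L)
    (η : ℝ) (hη : η = 1 / (4 * L))
    (ex : EuclideanSpace ℝ (Fin n) → EuclideanSpace ℝ (Fin m) → EuclideanSpace ℝ (Fin n))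
    (ey : EuclideanSpace ℝ (Fin n) → EuclideanSpace ℝ (Fin m) → EuclideanSpace ℝ (Fin m))
    (x xh : ℕ → EuclideanSpace ℝ (Fin n)) (y yh : ℕ → EuclideanSpace ℝ (Fin m))
    (hxmem : ∀ t, x t ∈ X) (hymem : ∀ t, y t ∈ Y)
    (hxhmem : ∀ t, xh t ∈ X) (hyhmem : ∀ t, yh t ∈ Y)
    -- ẑ_t = Π_Z(z_t − η G̃(z_t)) (componentwise projection)
    (hxh : ∀ t, ∀ z ∈ X,
      ‖(x t - η • (gx (x t) (y t) + ex (x t) (y t))) - xh t‖ ≤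
        ‖(x t - η • (gx (x t) (y t) + ex (x t) (y t))) - z‖)
    (hyh : ∀ t, ∀ z ∈ Y,
      ‖(y t + η • (gy (x t) (y t) + ey (x t) (y t))) - yh t‖ ≤
        ‖(y t + η • (gy (x t) (y t) + ey (x t) (y t))) - z‖)
    -- z_{t+1} = Π_Z(z_t − η G̃(ẑ_t))
    (hxn : ∀ t, ∀ z ∈ X,
      ‖(x t - η • (gx (xh t) (yh t) + ex (xh t) (yh t))) - x (t + 1)‖ ≤
        ‖(x t - η • (gx (xh t) (yh t) + ex (xh t) (yh t))) - z‖)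
    (hyn : ∀ t, ∀ z ∈ Y,
      ‖(y t + η • (gy (xh t) (yh t) + ey (xh t) (yh t))) - y (t + 1)‖ ≤
        ‖(y t + η • (gy (xh t) (yh t) + ey (xh t) (yh t))) - z‖)
    -- all gradient errors bounded by Δ at every query point
    (Δ : ℝ) (hΔ0 : 0 ≤ Δ)
    (herr : ∀ t, ‖ex (x t) (y t)‖ ≤ Δ ∧ ‖ex (xh t) (yh t)‖ ≤ Δ ∧
      ‖ey (x t) (y t)‖ ≤ Δ ∧ ‖ey (xh t) (yh t)‖ ≤ Δ) :
    (∀ t, ‖xs - x (t + 1)‖ ^ 2 + ‖ys - y (t + 1)‖ ^ 2 ≤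
        (1 - 1 / (4 * (L / μ))) * (‖xs - x t‖ ^ 2 + ‖ys - y t‖ ^ 2) +
          2 * Δ * D / L) ∧
    (∀ T : ℕ, ‖xs - x (T + 1)‖ ^ 2 + ‖ys - y (T + 1)‖ ^ 2 ≤
        Real.exp (-(T : ℝ) / (4 * (L / μ))) * (‖xs - x 1‖ ^ 2 + ‖ys - y 1‖ ^ 2) +
          8 * (L / μ) * Δ * D / L) := by
  have hL : 0 < L := hμ.trans_le hμL
  have step : ∀ t, ‖xs - x (t + 1)‖ ^ 2 + ‖ys - y (t + 1)‖ ^ 2 ≤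
      (1 - 1 / (4 * (L / μ))) * (‖xs - x t‖ ^ 2 + ‖ys - y t‖ ^ 2) + 2 * Δ * D / L :=
    fun t => perturbed_extragradient_step hX hY (norm_sub_le_of_diam_le hXc.isBounded hDX)
      (norm_sub_le_of_diam_le hYc.isBounded hDY) hμ hμL hsc hscc hsmooth_x hsmooth_y hxs hys
      hsaddle hη (hxmem t) (hymem t) (hxhmem t) (hyhmem t) (hxmem (t + 1)) (hymem (t + 1))
      (hxh t) (hyh t) (hxn t) (hyn t) (herr t)
  refine ⟨step, fun T => ?_⟩
  have hκ : 1 ≤ L / μ := (one_le_div hμ).2 hμL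
  have hD : 0 ≤ D := Metric.diam_nonneg.trans hDX
  have hrate : 1 / (4 * (L / μ)) ≤ 1 := by rw [div_le_one (by positivity)]; linarith
  have h := le_exp_mul_add_div_of_le_one_sub_mul_add
    (r := fun t => ‖xs - x (t + 1)‖ ^ 2 + ‖ys - y (t + 1)‖ ^ 2)
    (by positivity) hrate (by positivity) (by positivity) (fun t => step (t + 1)) T
  have hexp : -(T : ℝ) / (4 * (L / μ)) = -(T * (1 / (4 * (L / μ)))) := by ring
  have hsum : 8 * (L / μ) * Δ * D / L = 2 * Δ * D / L / (1 / (4 * (L / μ))) := by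
    field_simp; ring
  rw [hexp, hsum]
  exact h

/-- Theorem 3 of the paper (deterministic core): for an `L`-smooth,
`μ`-strongly convex-strongly concave `f` with saddle point `z* = (x*, y*)`, the
perturbed extra-gradient iteration with step size `η = 1/(4L)` and all gradient
errors bounded by `Δ` satisfies, writing `‖z* − z_t‖² = ‖x* − x_t‖² + ‖y* − y_t‖²`,
the contraction `‖z* − z_{t+1}‖² ≤ (1 − 1/(4κ))‖z* − z_t‖² + 2ΔD/L` with `κ = L/μ`,
and consequently `‖z* − z_{T+1}‖² ≤ e^{−T/(4κ)}‖z* − z_1‖² + 8κΔD/L`. -/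
theorem stmt17 {n m : ℕ} (X : Set (EuclideanSpace ℝ (Fin n)))
    (Y : Set (EuclideanSpace ℝ (Fin m)))
    (hX : Convex ℝ X) (hY : Convex ℝ Y) (hXc : IsCompact X) (hYc : IsCompact Y)
    (D : ℝ) (hDX : Metric.diam X ≤ D) (hDY : Metric.diam Y ≤ D)
    (f : EuclideanSpace ℝ (Fin n) → EuclideanSpace ℝ (Fin m) → ℝ)
    (gx : EuclideanSpace ℝ (Fin n) → EuclideanSpace ℝ (Fin m) → EuclideanSpace ℝ (Fin n))
    (gy : EuclideanSpace ℝ (Fin n) → EuclideanSpace ℝ (Fin m) → EuclideanSpace ℝ (Fin m))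
    (hgx : ∀ x y, HasGradientAt (fun x' => f x' y) (gx x y) x)
    (hgy : ∀ x y, HasGradientAt (fun y' => f x y') (gy x y) y)
    (μ L : ℝ) (hμ : 0 < μ) (hμL : μ ≤ L)
    -- μ-strong convexity in x and μ-strong concavity in y (Assumption 2)
    (hsc : ∀ y ∈ Y, ∀ x₁ ∈ X, ∀ x₂ ∈ X,
      f x₂ y ≥ f x₁ y + ⟪gx x₁ y, x₂ - x₁⟫ + μ / 2 * ‖x₂ - x₁‖ ^ 2)
    (hscc : ∀ x ∈ X, ∀ y₁ ∈ Y, ∀ y₂ ∈ Y,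
      f x y₂ ≤ f x y₁ + ⟪gy x y₁, y₂ - y₁⟫ - μ / 2 * ‖y₂ - y₁‖ ^ 2)
    -- L-smoothness (Assumption 1)
    (hsmooth_x : ∀ x₁ ∈ X, ∀ y₁ ∈ Y, ∀ x₂ ∈ X, ∀ y₂ ∈ Y,
      ‖gx x₁ y₁ - gx x₂ y₂‖ ≤ L * (‖x₁ - x₂‖ + ‖y₁ - y₂‖))
    (hsmooth_y : ∀ x₁ ∈ X, ∀ y₁ ∈ Y, ∀ x₂ ∈ X, ∀ y₂ ∈ Y,
      ‖gy x₁ y₁ - gy x₂ y₂‖ ≤ L * (‖x₁ - x₂‖ + ‖y₁ - y₂‖))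
    -- saddle point z* = (x*, y*)
    (xs : EuclideanSpace ℝ (Fin n)) (ys : EuclideanSpace ℝ (Fin m))
    (hxs : xs ∈ X) (hys : ys ∈ Y)
    (hsaddle : ∀ x ∈ X, ∀ y ∈ Y, f xs y ≤ f xs ys ∧ f xs ys ≤ f x ys)
    -- step size η = 1/(4L)
    (η : ℝ) (hη : η = 1 / (4 * L))
    (ex : EuclideanSpace ℝ (Fin n) → EuclideanSpace ℝ (Fin m) → EuclideanSpace ℝ (Fin n))
    (ey : EuclideanSpace ℝ (Fin n) → EuclideanSpace ℝ (Fin m) → EuclideanSpace ℝ (Fin m))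
    (x xh : ℕ → EuclideanSpace ℝ (Fin n)) (y yh : ℕ → EuclideanSpace ℝ (Fin m))
    (hxmem : ∀ t, x t ∈ X) (hymem : ∀ t, y t ∈ Y)
    (hxhmem : ∀ t, xh t ∈ X) (hyhmem : ∀ t, yh t ∈ Y)
    -- ẑ_t = Π_Z(z_t − η G̃(z_t)) (componentwise projection)
    (hxh : ∀ t, ∀ z ∈ X,
      ‖(x t - η • (gx (x t) (y t) + ex (x t) (y t))) - xh t‖ ≤
        ‖(x t - η • (gx (x t) (y t) + ex (x t) (y t))) - z‖)
    (hyh : ∀ t, ∀ z ∈ Y,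
      ‖(y t + η • (gy (x t) (y t) + ey (x t) (y t))) - yh t‖ ≤
        ‖(y t + η • (gy (x t) (y t) + ey (x t) (y t))) - z‖)
    -- z_{t+1} = Π_Z(z_t − η G̃(ẑ_t))
    (hxn : ∀ t, ∀ z ∈ X,
      ‖(x t - η • (gx (xh t) (yh t) + ex (xh t) (yh t))) - x (t + 1)‖ ≤
        ‖(x t - η • (gx (xh t) (yh t) + ex (xh t) (yh t))) - z‖)
    (hyn : ∀ t, ∀ z ∈ Y,
      ‖(y t + η • (gy (xh t) (yh t) + ey (xh t) (yh t))) - y (t + 1)‖ ≤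
        ‖(y t + η • (gy (xh t) (yh t) + ey (xh t) (yh t))) - z‖)
    -- all gradient errors bounded by Δ at every query point
    (Δ : ℝ) (hΔ0 : 0 ≤ Δ)
    (herr : ∀ t, ‖ex (x t) (y t)‖ ≤ Δ ∧ ‖ex (xh t) (yh t)‖ ≤ Δ ∧
      ‖ey (x t) (y t)‖ ≤ Δ ∧ ‖ey (xh t) (yh t)‖ ≤ Δ) :
    (∀ t, ‖xs - x (t + 1)‖ ^ 2 + ‖ys - y (t + 1)‖ ^ 2 ≤
        (1 - 1 / (4 * (L / μ))) * (‖xs - x t‖ ^ 2 + ‖ys - y t‖ ^ 2) +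
          2 * Δ * D / L) ∧
    (∀ T : ℕ, ‖xs - x (T + 1)‖ ^ 2 + ‖ys - y (T + 1)‖ ^ 2 ≤
        Real.exp (-(T : ℝ) / (4 * (L / μ))) * (‖xs - x 1‖ ^ 2 + ‖ys - y 1‖ ^ 2) +
          8 * (L / μ) * Δ * D / L) :=
  stmt17_general X Y hX hY hXc hYc D hDX hDY f gx gy μ L hμ hμL hsc hscc hsmooth_x hsmooth_y xs ys
    hxs hys hsaddle η hη ex ey x xh y yh hxmem hymem hxhmem hyhmem hxh hyh hxn hyn Δ hΔ0 herr
end
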